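/- Let k be an algebraically closed field of characteristic p > 0 and let U ⊆ k be an additive subgroup of order p^n. Consider the representation of U on the p^n-dimensional space of homogeneous polynomials of degree p^n − 1 in k[x,y], where λ ∈ U acts by the k-algebra substitution x ↦ x + λy, y ↦ y. Then this representation is isomorphic to the regular representation of U over k; equivalently, this homogeneous component is a free module of rank one over the group algebra k[U]. -/

import Mathlib

open MvPolynomial

/-- The `k`-algebra substitution `x ↦ x + λ·y, y ↦ y` on polynomials in two variables. -/
noncomputable def shearSubst (k : Type*) [CommRing k] (lam : k) :
    MvPolynomial (Fin 2) k →ₐ[k] MvPolynomial (Fin 2) k :=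
  MvPolynomial.aeval ![X 0 + C lam * X 1, X 1]

/-! ### Auxiliary lemmas -/

/-- `p` does not divide `(p-1).choose d` for `d < p`. -/
lemma aux_not_dvd_choose_pred (p : ℕ) (hp : p.Prime) (d : ℕ) (hd : d < p) :
    ¬ p ∣ (p - 1).choose d := by
  induction d with
  | zero => simpa using hp.ne_one
  | succ d ih =>
    intro hdvd
    have ih' := ih (by omega)
    have key : (p - 1).choose (d + 1) * (d + 1) = (p - 1).choose d * (p - 1 - d) :=
      Nat.choose_succ_right_eq _ _
    have h1 : p ∣ (p - 1).choose d * (p - 1 - d) := key ▸ hdvd.mul_right (d + 1)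
    rcases (hp.dvd_mul.mp h1) with h | h
    · exact ih' h
    · have := Nat.le_of_dvd (by omega) h
      omega

/-- Base-`p` digits of `p ^ n - 1` are all `p - 1`. -/
lemma aux_digit_pred_pow (p : ℕ) (hp : 1 < p) (n j : ℕ) (hj : j < n) :
    (p ^ n - 1) / p ^ j % p = p - 1 := by
  have hpj : 1 ≤ p ^ j := Nat.one_le_pow _ _ (by omega)
  have hpnj : 1 ≤ p ^ (n - j) := Nat.one_le_pow _ _ (by omega)
  have h1 : (p ^ n - 1) / p ^ j = p ^ (n - j) - 1 := by
    apply Nat.div_eq_of_lt_le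
    · rw [Nat.sub_mul, one_mul, ← pow_add, Nat.sub_add_cancel hj.le]
      omega
    · rw [Nat.sub_add_cancel hpnj, ← pow_add, Nat.sub_add_cancel hj.le]
      have : 1 ≤ p ^ n := Nat.one_le_pow _ _ (by omega)
      omega
  rw [h1]
  obtain ⟨a, ha⟩ : ∃ a, n - j = a + 1 := ⟨n - j - 1, by omega⟩
  have hpa : 1 ≤ p ^ a := Nat.one_le_pow _ _ (by omega)
  rw [ha, pow_succ]
  have h2 : p ^ a * p - 1 = (p - 1) + (p ^ a - 1) * p := by
    rw [Nat.sub_mul, one_mul]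
    have : p ≤ p ^ a * p := Nat.le_mul_of_pos_left p hpa
    omega
  rw [h2, Nat.add_mul_mod_self_right, Nat.mod_eq_of_lt (by omega)]

/-- Lucas: `p` does not divide `(p^n - 1).choose i` for `i < p ^ n`. -/
lemma aux_not_dvd_choose_pred_pow (p : ℕ) (hp : p.Prime) (n i : ℕ) (hi : i < p ^ n) :
    ¬ p ∣ (p ^ n - 1).choose i := by
  haveI : Fact p.Prime := ⟨hp⟩
  intro hdvd
  have hq : 0 < p ^ n := pow_pos hp.pos n
  have hmod := Choose.choose_modEq_prod_range_choose_nat (p := p)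
    (n := p ^ n - 1) (k := i) (by omega) hi
  have hprod : p ∣ ∏ j ∈ Finset.range n, ((p ^ n - 1) / p ^ j % p).choose (i / p ^ j % p) :=
    (Nat.modEq_zero_iff_dvd).mp (((Nat.modEq_zero_iff_dvd).mpr hdvd).symm.trans hmod).symm
  obtain ⟨j, hj, hdvdj⟩ := (hp.prime.dvd_finset_prod_iff _).mp hprod
  rw [aux_digit_pred_pow p hp.one_lt n j (Finset.mem_range.mp hj)] at hdvdj
  exact aux_not_dvd_choose_pred p hp _ (Nat.mod_lt _ hp.pos) hdvdj

lemma aux_fin2_decomp (d : Fin 2 →₀ ℕ) :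
    d = Finsupp.single 0 (d 0) + Finsupp.single 1 (d 1) := by
  ext a
  fin_cases a <;> simp [Finsupp.single_apply]

lemma aux_single_add_single_inj {a b c d : ℕ}
    (h : Finsupp.single (0 : Fin 2) a + Finsupp.single 1 b =
      Finsupp.single 0 c + Finsupp.single 1 d) : a = c ∧ b = d := by
  constructor
  · have := DFunLike.congr_fun h 0
    simpa [Finsupp.single_apply] using this
  · have := DFunLike.congr_fun h 1
    simpa [Finsupp.single_apply] using this

lemma aux_degree_fin2 (d : Fin 2 →₀ ℕ) : d.degree = d 0 + d 1 := by
  rw [Finsupp.degree_apply]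
  rw [Finset.sum_subset (Finset.subset_univ d.support)
    (fun x _ hx => Finsupp.notMem_support_iff.mp hx)]
  simp [Fin.sum_univ_two]

/-- A homogeneous polynomial of degree `m` in two variables all of whose coefficients
at `x^(m-i) y^i` vanish is zero. -/
lemma aux_eq_zero_of_coeff (k : Type*) [CommRing k] (m : ℕ) (P : MvPolynomial (Fin 2) k)
    (hP : P.IsHomogeneous m)
    (h : ∀ i ≤ m, coeff (Finsupp.single 0 (m - i) + Finsupp.single 1 i) P = 0) :
    P = 0 := by
  ext d
  rw [coeff_zero]
  by_cases hd : d.degree = m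
  · have hdeg : d 0 + d 1 = m := by rw [← aux_degree_fin2]; exact hd
    have hle : d 1 ≤ m := by omega
    have := h (d 1) hle
    rwa [show m - d 1 = d 0 by omega, ← aux_fin2_decomp d] at this
  · exact hP.coeff_eq_zero hd

/-- The coefficient of `x^(m-i) y^i` in `(x + λ y)^m` is `choose m i * λ^i`. -/
lemma aux_coeff_shear (k : Type*) [CommRing k] (lam : k) (m i : ℕ) (hi : i ≤ m) :
    coeff (Finsupp.single 0 (m - i) + Finsupp.single 1 i)
      ((X 0 + C lam * X 1 : MvPolynomial (Fin 2) k) ^ m) = (m.choose i : k) * lam ^ i := by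
  rw [add_pow, coeff_sum]
  have hterm : ∀ j : ℕ,
      (X (0 : Fin 2) : MvPolynomial (Fin 2) k) ^ j * (C lam * X 1) ^ (m - j)
          * ((m.choose j : ℕ) : MvPolynomial (Fin 2) k)
        = monomial (Finsupp.single 0 j + Finsupp.single 1 (m - j))
            (lam ^ (m - j) * (m.choose j : k)) := by
    intro j
    rw [mul_pow, ← C_pow, X_pow_eq_monomial, X_pow_eq_monomial,
      show ((m.choose j : ℕ) : MvPolynomial (Fin 2) k) = C ((m.choose j : ℕ) : k) by
        rw [C_eq_coe_nat],
      C_mul_monomial, monomial_mul]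
    rw [mul_comm _ (C ((m.choose j : ℕ) : k)), C_mul_monomial]
    congr 1
    ring
  rw [Finset.sum_congr rfl (fun j _ => by rw [hterm j])]
  rw [Finset.sum_eq_single (m - i)]
  · rw [Nat.sub_sub_self hi, coeff_monomial, if_pos rfl, Nat.choose_symm hi, mul_comm]
  · intro j hj hji
    rw [coeff_monomial, if_neg]
    intro hcontra
    exact hji (aux_single_add_single_inj hcontra).1
  · intro hmem
    exact absurd (Finset.mem_range.mpr (by omega)) hmem

lemma aux_shear_pow (k : Type*) [CommRing k] (lam : k) (m : ℕ) :
    shearSubst k lam (X 0 ^ m) = (X 0 + C lam * X 1 : MvPolynomial (Fin 2) k) ^ m := by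
  rw [shearSubst, map_pow, aeval_X]
  simp

/-- Let `k` be an algebraically closed field of characteristic `p > 0`
and let `U ⊆ k` be an additive subgroup of order `p ^ n`. Then the representation of `U`
on the space of homogeneous polynomials of degree `p ^ n - 1` in `k[x,y]` (with `λ ∈ U`
acting by the substitution `x ↦ x + λy, y ↦ y`) is isomorphic to the regular
representation of `U` over `k`; i.e. it is a free module of rank one over the group
algebra `k[U]`: there is a single homogeneous polynomial `P₀` of degree `p ^ n - 1`
whose translates under `U` form a `k`-basis of the degree-`(p ^ n - 1)` homogeneous
component. -/
theorem steinberg_restriction_free_of_rank_one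
    (p : ℕ) (hp : p.Prime) (k : Type*) [Field k] [IsAlgClosed k] [CharP k p]
    (n : ℕ) (U : AddSubgroup k) (hU : Nat.card U = p ^ n) :
    ∃ P₀ : MvPolynomial (Fin 2) k, P₀.IsHomogeneous (p ^ n - 1) ∧
      LinearIndependent k (fun lam : U => shearSubst k (lam : k) P₀) ∧
      Submodule.span k (Set.range fun lam : U => shearSubst k (lam : k) P₀) =
        MvPolynomial.homogeneousSubmodule (Fin 2) k (p ^ n - 1) := by
  classical
  set q := p ^ n with hq
  have hq0 : 0 < q := pow_pos hp.pos n
  set m := q - 1 with hm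
  have hmq : m + 1 = q := Nat.succ_pred_eq_of_pos hq0
  -- setup: the finite enumeration of U
  have hfin : Finite U := Nat.finite_of_card_ne_zero (by omega)
  haveI := Fintype.ofFinite U
  have hcard : Fintype.card U = q := by rw [← Nat.card_eq_fintype_card, hU]
  let σe : U ≃ Fin q := Fintype.equivFinOfCardEq hcard
  let μ : Fin q → k := fun j => ((σe.symm j : U) : k)
  have hμ : Function.Injective μ := fun a b hab => by
    apply σe.symm.injective
    exact Subtype.ext hab
  -- the coefficient matrix
  let cv : Fin q → k := fun i => ((m.choose i : ℕ) : k)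
  have hc : ∀ i : Fin q, cv i ≠ 0 := by
    intro i
    have hilt : (i : ℕ) < q := i.isLt
    have := aux_not_dvd_choose_pred_pow p hp n i (by omega)
    simpa [cv, hm, hq, CharP.cast_eq_zero_iff k p] using this
  let e : Fin q → (Fin 2 →₀ ℕ) := fun i =>
    Finsupp.single 0 (m - (i : ℕ)) + Finsupp.single 1 (i : ℕ)
  let M : Matrix (Fin q) (Fin q) k := Matrix.of fun i j => cv i * μ j ^ (i : ℕ)
  have hM : M = Matrix.diagonal cv * (Matrix.vandermonde μ).transpose := by
    ext i j
    rw [Matrix.diagonal_mul]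
    rfl
  have hdet : M.det ≠ 0 := by
    rw [hM, Matrix.det_mul, Matrix.det_transpose, Matrix.det_diagonal]
    exact mul_ne_zero (Finset.prod_ne_zero_iff.mpr fun i _ => hc i)
      (Matrix.det_vandermonde_ne_zero_iff.mpr hμ)
  -- the key coefficient computation
  have key : ∀ (lam : k) (i : Fin q),
      coeff (e i) (shearSubst k lam (X 0 ^ m)) = cv i * lam ^ (i : ℕ) := by
    intro lam i
    have hilt : (i : ℕ) < q := i.isLt
    rw [aux_shear_pow, aux_coeff_shear k lam m i (by omega)]
  -- homogeneity of all the shears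
  have hshear_hom : ∀ lam : k, (shearSubst k lam (X 0 ^ m)).IsHomogeneous m := by
    intro lam
    rw [aux_shear_pow]
    have h1 : (X 0 + C lam * X 1 : MvPolynomial (Fin 2) k).IsHomogeneous 1 :=
      (isHomogeneous_X k 0).add (isHomogeneous_C_mul_X lam 1)
    simpa using h1.pow m
  refine ⟨X 0 ^ m, by simpa using (isHomogeneous_X k 0).pow m, ?_, ?_⟩
  · -- linear independence
    rw [Fintype.linearIndependent_iff]
    intro g hg
    have hsol : M.mulVec (fun j => g (σe.symm j)) = 0 := by
      funext i
      have hcoeff := congrArg (coeff (e i)) hg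
      rw [coeff_sum, coeff_zero] at hcoeff
      simp only [coeff_smul, smul_eq_mul, key] at hcoeff
      have reix := Equiv.sum_comp σe.symm
        (fun lam : U => g lam * (cv i * (lam : k) ^ (i : ℕ)))
      rw [reix] at *
      rw [Matrix.mulVec, Pi.zero_apply]
      rw [show (dotProduct (M i) fun j => g (σe.symm j))
          = ∑ j : Fin q, g (σe.symm j) * (cv i * μ j ^ (i : ℕ)) by
        rw [dotProduct]
        exact Finset.sum_congr rfl fun j _ => by rw [mul_comm]; rfl]
      rw [Equiv.sum_comp σe.symm (fun lam : U => g lam * (cv i * (lam : k) ^ (i : ℕ)))]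
      exact hcoeff
    have hzero := Matrix.eq_zero_of_mulVec_eq_zero hdet hsol
    intro lam
    have := congrFun hzero (σe lam)
    simpa using this
  · -- span
    apply le_antisymm
    · rw [Submodule.span_le]
      rintro _ ⟨lam, rfl⟩
      rw [SetLike.mem_coe, mem_homogeneousSubmodule]
      exact hshear_hom lam
    · intro P hP
      have hPh : P.IsHomogeneous m := (mem_homogeneousSubmodule _ _).mp hP
      set v : Fin q → k := fun i => coeff (e i) P with hv
      set d : Fin q → k := M⁻¹.mulVec v with hd
      have hMd : M.mulVec d = v := by
        rw [hd, Matrix.mulVec_mulVec, Matrix.mul_nonsing_inv _ (isUnit_iff_ne_zero.mpr hdet),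
          Matrix.one_mulVec]
      set Q : MvPolynomial (Fin 2) k := ∑ j : Fin q, d j • shearSubst k (μ j) (X 0 ^ m) with hQ
      have hQh : Q.IsHomogeneous m := by
        rw [← mem_homogeneousSubmodule]
        exact Submodule.sum_mem _ fun j _ => Submodule.smul_mem _ _
          ((mem_homogeneousSubmodule _ _).mpr (hshear_hom (μ j)))
      have hPQ : P = Q := by
        have hsub : P - Q = 0 := by
          apply aux_eq_zero_of_coeff k m _ (hPh.sub hQh)
          intro i hi
          have hiq : i < q := by omega
          have hEq : Finsupp.single (0 : Fin 2) (m - i) + Finsupp.single 1 i = e ⟨i, hiq⟩ := rfl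
          rw [hEq, coeff_sub, hQ, coeff_sum]
          simp only [coeff_smul, smul_eq_mul, key]
          have : ∑ j : Fin q, d j * (cv ⟨i, hiq⟩ * μ j ^ ((⟨i, hiq⟩ : Fin q) : ℕ))
              = M.mulVec d ⟨i, hiq⟩ := by
            rw [Matrix.mulVec, dotProduct]
            exact Finset.sum_congr rfl fun j _ => by rw [mul_comm]; rfl
          rw [this, hMd]
          simp [v]
        exact sub_eq_zero.mp hsub
      rw [hPQ, hQ]
      apply Submodule.sum_mem
      intro j _
      apply Submodule.smul_mem
      apply Submodule.subset_span
      exact ⟨σe.symm j, rfl⟩
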